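/- If G(x, t, ω, u, u₁, …, u_k) is a symmetry of the CDIS equation of order k ≥ 1 (i.e. ∂G/∂u_k ≠ 0 and D_t(G) = F_*(G)), then ∂G/∂u_k depends only on t: D(∂G/∂u_k) = 0 implies ∂G/∂u_k = c_k(t). -/

import Mathlib

/-- A "jet function": a function of x, t, the nonlocal variable ω, and the jet
variables u₀, u₁, u₂, … (of which it will depend on only finitely many). -/
abbrev Jet : Type := ℝ → ℝ → ℝ → (ℕ → ℝ) → ℝ

/-- Partial derivative with respect to the jet variable u_i. -/
noncomputable def pdu (i : ℕ) (G : Jet) : Jet := fun x t w u =>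
  deriv (fun v => G x t w (Function.update u i v)) (u i)

/-- Partial derivative with respect to x. -/
noncomputable def pdx (G : Jet) : Jet := fun x t w u => deriv (fun y => G y t w u) x

/-- Partial derivative with respect to t. -/
noncomputable def pdt (G : Jet) : Jet := fun x t w u => deriv (fun s => G x s w u) t

/-- Partial derivative with respect to ω. -/
noncomputable def pdw (G : Jet) : Jet := fun x t w u => deriv (fun z => G x t z u) w

/-- The total x-derivative D = ∂_x + u²∂_ω + Σ u_{i+1}∂_{u_i}. -/
noncomputable def DD (G : Jet) : Jet := fun x t w u =>
  pdx G x t w u + (u 0) ^ 2 * pdw G x t w u + ∑' i : ℕ, u (i + 1) * pdu i G x t w u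

/-- The right-hand side F = u₃ + 3u²u₂ + 9uu₁² + 3u⁴u₁ of the CDIS equation. -/
noncomputable def Fj : Jet := fun _ _ _ u =>
  u 3 + 3 * (u 0) ^ 2 * u 2 + 9 * u 0 * (u 1) ^ 2 + 3 * (u 0) ^ 4 * u 1

/-- The flux σ = 2uu₂ + 6u³u₁ + u⁶ − u₁² defining ω_t. -/
noncomputable def sigmaJ : Jet := fun _ _ _ u =>
  2 * u 0 * u 2 + 6 * (u 0) ^ 3 * u 1 + (u 0) ^ 6 - (u 1) ^ 2

/-- The total t-derivative D_t = ∂_t + σ∂_ω + Σ Dⁱ(F)∂_{u_i}. -/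
noncomputable def DDt (G : Jet) : Jet := fun x t w u =>
  pdt G x t w u + sigmaJ x t w u * pdw G x t w u +
    ∑' i : ℕ, (DD^[i] Fj) x t w u * pdu i G x t w u

/-- The linearization F_* = Σ_{i=0}^{3} (∂F/∂u_i) Dⁱ applied to G. -/
noncomputable def FstarJ (G : Jet) : Jet := fun x t w u =>
  ∑ i ∈ Finset.range 4, pdu i Fj x t w u * (DD^[i] G) x t w u

set_option linter.unusedVariables false

namespace CDIS

abbrev Em (m : ℕ) : Type := ℝ × ℝ × ℝ × (Fin (m+1) → ℝ)

def Pm (m : ℕ) (x t w : ℝ) (u : ℕ → ℝ) : Em m := (x, t, w, fun i => u i)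

def lift (m : ℕ) (g : Em m → ℝ) : Jet := fun x t w u => g (Pm m x t w u)

def ex (m : ℕ) : Em m := (1,0,0,0)
def et (m : ℕ) : Em m := (0,1,0,0)
def ew (m : ℕ) : Em m := (0,0,1,0)
def eu (m : ℕ) (i : Fin (m+1)) : Em m := (0,0,0, Pi.single i 1)

lemma curve_x (m : ℕ) (x t w : ℝ) (u : ℕ → ℝ) (y : ℝ) :
    Pm m y t w u = Pm m x t w u + (y - x) • ex m := by
  refine Prod.ext ?_ (Prod.ext ?_ (Prod.ext ?_ ?_)) <;>
    simp [Pm, ex] <;> ring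

lemma curve_t (m : ℕ) (x t w : ℝ) (u : ℕ → ℝ) (s : ℝ) :
    Pm m x s w u = Pm m x t w u + (s - t) • et m := by
  refine Prod.ext ?_ (Prod.ext ?_ (Prod.ext ?_ ?_)) <;>
    simp [Pm, et] <;> ring

lemma curve_w (m : ℕ) (x t w : ℝ) (u : ℕ → ℝ) (z : ℝ) :
    Pm m x t z u = Pm m x t w u + (z - w) • ew m := by
  refine Prod.ext ?_ (Prod.ext ?_ (Prod.ext ?_ ?_)) <;>
    simp [Pm, ew] <;> ring

lemma curve_u (m : ℕ) (x t w : ℝ) (u : ℕ → ℝ) {i : ℕ} (h : i < m + 1) (v : ℝ) :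
    Pm m x t w (Function.update u i v) = Pm m x t w u + (v - u i) • eu m ⟨i, h⟩ := by
  refine Prod.ext ?_ (Prod.ext ?_ (Prod.ext ?_ ?_)) <;> simp [Pm, eu]
  funext j
  rcases eq_or_ne (j : ℕ) i with hj | hj
  · have : j = ⟨i, h⟩ := Fin.ext hj
    subst this
    simp [Function.update, hj]
  · have : j ≠ ⟨i, h⟩ := fun hc => hj (by rw [hc])
    simp [Function.update_of_ne hj, Pi.single_apply, this]

lemma curve_u_out (m : ℕ) (x t w : ℝ) (u : ℕ → ℝ) {i : ℕ} (h : ¬ i < m + 1) (v : ℝ) :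
    Pm m x t w (Function.update u i v) = Pm m x t w u := by
  refine Prod.ext rfl (Prod.ext rfl (Prod.ext rfl ?_))
  funext j
  have : (j : ℕ) ≠ i := fun hc => h (hc ▸ j.isLt)
  simp [Pm, Function.update_of_ne this]

end CDIS
namespace CDIS

variable {m : ℕ} {g : Em m → ℝ}

lemma hasDerivAt_along (hg : ContDiff ℝ (⊤ : ℕ∞) g) (p d : Em m) (c v₀ : ℝ) :
    HasDerivAt (fun v => g (p + (v - c) • d)) (fderiv ℝ g (p + (v₀ - c) • d) d) v₀ := by
  have h1 : HasDerivAt (fun v : ℝ => p + (v - c) • d) d v₀ := by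
    simpa using (((hasDerivAt_id v₀).sub_const c).smul_const d).const_add p
  have h2 := (hg.differentiable (by simp) (p + (v₀ - c) • d)).hasFDerivAt
  exact h2.comp_hasDerivAt v₀ h1

/-- the partial derivative functions at the `g`-level -/
noncomputable def du (m : ℕ) (i : ℕ) (g : Em m → ℝ) : Em m → ℝ :=
  if h : i < m + 1 then (fun p => fderiv ℝ g p (eu m ⟨i, h⟩)) else (fun _ => 0)

noncomputable def dX (g : Em m → ℝ) : Em m → ℝ := fun p => fderiv ℝ g p (ex m)
noncomputable def dT (g : Em m → ℝ) : Em m → ℝ := fun p => fderiv ℝ g p (et m)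
noncomputable def dW (g : Em m → ℝ) : Em m → ℝ := fun p => fderiv ℝ g p (ew m)

lemma contDiff_dir (hg : ContDiff ℝ (⊤ : ℕ∞) g) (d : Em m) :
    ContDiff ℝ (⊤ : ℕ∞) (fun p => fderiv ℝ g p d) :=
  (hg.fderiv_right (by simp)).clm_apply contDiff_const

lemma contDiff_du (hg : ContDiff ℝ (⊤ : ℕ∞) g) (i : ℕ) : ContDiff ℝ (⊤ : ℕ∞) (du m i g) := by
  unfold du; split
  · exact contDiff_dir hg _
  · exact contDiff_const

lemma contDiff_dX (hg : ContDiff ℝ (⊤ : ℕ∞) g) : ContDiff ℝ (⊤ : ℕ∞) (dX g) := contDiff_dir hg _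
lemma contDiff_dT (hg : ContDiff ℝ (⊤ : ℕ∞) g) : ContDiff ℝ (⊤ : ℕ∞) (dT g) := contDiff_dir hg _
lemma contDiff_dW (hg : ContDiff ℝ (⊤ : ℕ∞) g) : ContDiff ℝ (⊤ : ℕ∞) (dW g) := contDiff_dir hg _

/-- slice of a lift in direction u_i has a derivative, given by `pdu`. -/
lemma slice_u (hg : ContDiff ℝ (⊤ : ℕ∞) g) (x t w : ℝ) (u : ℕ → ℝ) (i : ℕ) :
    HasDerivAt (fun v => lift m g x t w (Function.update u i v))
      (lift m (du m i g) x t w u) (u i) := by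
  by_cases h : i < m + 1
  · have := hasDerivAt_along hg (Pm m x t w u) (eu m ⟨i, h⟩) (u i) (u i)
    simp only [sub_self, zero_smul, add_zero] at this
    have he : (fun v => lift m g x t w (Function.update u i v))
        = fun v => g (Pm m x t w u + (v - u i) • eu m ⟨i, h⟩) := by
      funext v; rw [lift, curve_u m x t w u h v]
    rw [he, lift, du, dif_pos h]
    exact this
  · have he : (fun v => lift m g x t w (Function.update u i v))
        = fun _ => g (Pm m x t w u) := by
      funext v; rw [lift, curve_u_out m x t w u h v]
    rw [he, lift, du, dif_neg h]
    exact hasDerivAt_const _ _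

lemma pdu_lift (hg : ContDiff ℝ (⊤ : ℕ∞) g) (i : ℕ) :
    pdu i (lift m g) = lift m (du m i g) := by
  funext x t w u
  exact (slice_u hg x t w u i).deriv

lemma slice_x (hg : ContDiff ℝ (⊤ : ℕ∞) g) (x t w : ℝ) (u : ℕ → ℝ) :
    HasDerivAt (fun y => lift m g y t w u) (lift m (dX g) x t w u) x := by
  have := hasDerivAt_along hg (Pm m x t w u) (ex m) x x
  simp only [sub_self, zero_smul, add_zero] at this
  have he : (fun y => lift m g y t w u) = fun y => g (Pm m x t w u + (y - x) • ex m) := by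
    funext y; rw [lift, curve_x m x t w u y]
  rw [he]; exact this

lemma slice_t (hg : ContDiff ℝ (⊤ : ℕ∞) g) (x t w : ℝ) (u : ℕ → ℝ) :
    HasDerivAt (fun s => lift m g x s w u) (lift m (dT g) x t w u) t := by
  have := hasDerivAt_along hg (Pm m x t w u) (et m) t t
  simp only [sub_self, zero_smul, add_zero] at this
  have he : (fun s => lift m g x s w u) = fun s => g (Pm m x t w u + (s - t) • et m) := by
    funext s; rw [lift, curve_t m x t w u s]
  rw [he]; exact this

lemma slice_w (hg : ContDiff ℝ (⊤ : ℕ∞) g) (x t w : ℝ) (u : ℕ → ℝ) :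
    HasDerivAt (fun z => lift m g x t z u) (lift m (dW g) x t w u) w := by
  have := hasDerivAt_along hg (Pm m x t w u) (ew m) w w
  simp only [sub_self, zero_smul, add_zero] at this
  have he : (fun z => lift m g x t z u) = fun z => g (Pm m x t w u + (z - w) • ew m) := by
    funext z; rw [lift, curve_w m x t w u z]
  rw [he]; exact this

lemma pdx_lift (hg : ContDiff ℝ (⊤ : ℕ∞) g) : pdx (lift m g) = lift m (dX g) := by
  funext x t w u; exact (slice_x hg x t w u).deriv
lemma pdt_lift (hg : ContDiff ℝ (⊤ : ℕ∞) g) : pdt (lift m g) = lift m (dT g) := by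
  funext x t w u; exact (slice_t hg x t w u).deriv
lemma pdw_lift (hg : ContDiff ℝ (⊤ : ℕ∞) g) : pdw (lift m g) = lift m (dW g) := by
  funext x t w u; exact (slice_w hg x t w u).deriv

lemma pdu_lift_out (hg : ContDiff ℝ (⊤ : ℕ∞) g) {i : ℕ} (h : ¬ i < m + 1) (x t w : ℝ) (u : ℕ → ℝ) :
    pdu i (lift m g) x t w u = 0 := by
  rw [pdu_lift hg, lift, du, dif_neg h]

end CDIS
namespace CDIS

variable {m : ℕ} {g : Em m → ℝ}

lemma fderiv_swap (hg : ContDiff ℝ (⊤ : ℕ∞) g) (p v w : Em m) :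
    fderiv ℝ (fun q => fderiv ℝ g q v) p w = fderiv ℝ (fun q => fderiv ℝ g q w) p v := by
  have hd : Differentiable ℝ (fderiv ℝ g) :=
    (hg.fderiv_right (m := (⊤ : ℕ∞)) (by simp)).differentiable (by simp)
  have key : ∀ a b : Em m,
      fderiv ℝ (fun q => fderiv ℝ g q a) p b = fderiv ℝ (fderiv ℝ g) p b a := by
    intro a b
    have := fderiv_clm_apply (𝕜 := ℝ) (c := fderiv ℝ g) (u := fun _ => a) (hd p)
      (differentiableAt_const a)
    rw [show (fun q => fderiv ℝ g q a) = fun q => (fderiv ℝ g q) a from rfl, this]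
    simp
  rw [key, key]
  exact (hg.contDiffAt.isSymmSndFDerivAt (by rw [minSmoothness_of_isRCLikeNormedField]; exact WithTop.coe_le_coe.mpr (le_top : (2 : ℕ∞) ≤ ⊤))) _ _

lemma du_swap (hg : ContDiff ℝ (⊤ : ℕ∞) g) (a b : ℕ) :
    du m a (du m b g) = du m b (du m a g) := by
  by_cases ha : a < m + 1 <;> by_cases hb : b < m + 1
  · funext p
    simp only [du, dif_pos ha, dif_pos hb]
    exact fderiv_swap hg p _ _
  · simp only [du, dif_pos ha, dif_neg hb]
    funext p; simp
  · simp only [du, dif_neg ha, dif_pos hb]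
    funext p; simp
  · simp only [du, dif_neg ha, dif_neg hb]

lemma du_dX_swap (hg : ContDiff ℝ (⊤ : ℕ∞) g) (a : ℕ) :
    du m a (dX g) = dX (du m a g) := by
  by_cases ha : a < m + 1
  · funext p
    simp only [du, dX, dif_pos ha]
    exact fderiv_swap hg p _ _
  · simp only [du, dif_neg ha]
    funext p; simp [dX]

lemma du_dW_swap (hg : ContDiff ℝ (⊤ : ℕ∞) g) (a : ℕ) :
    du m a (dW g) = dW (du m a g) := by
  by_cases ha : a < m + 1
  · funext p
    simp only [du, dW, dif_pos ha]
    exact fderiv_swap hg p _ _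
  · simp only [du, dif_neg ha]
    funext p; simp [dW]

end CDIS
namespace CDIS

variable {m : ℕ} {g : Em m → ℝ}

/-- coordinate function -/
def cu (m : ℕ) (i : Fin (m+1)) : Em m → ℝ := fun p => p.2.2.2 i

lemma contDiff_cu (m : ℕ) (i : Fin (m+1)) : ContDiff ℝ (⊤ : ℕ∞) (cu m i) :=
  (ContinuousLinearMap.proj (R := ℝ) (φ := fun _ : Fin (m+1) => ℝ) i).contDiff.comp
    (contDiff_snd.comp (contDiff_snd.comp contDiff_snd))

/-- projection from the (m+1)-jet space to the m-jet space -/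
def pr (m : ℕ) : Em (m+1) → Em m := fun p =>
  (p.1, p.2.1, p.2.2.1, fun i => p.2.2.2 i.castSucc)

lemma contDiff_pr (m : ℕ) : ContDiff ℝ (⊤ : ℕ∞) (pr m) := by
  refine ContDiff.prodMk contDiff_fst (ContDiff.prodMk (contDiff_fst.comp contDiff_snd)
    (ContDiff.prodMk (contDiff_fst.comp (contDiff_snd.comp contDiff_snd)) ?_))
  exact contDiff_pi.mpr fun i => contDiff_cu (m+1) i.castSucc

lemma pr_Pm (m : ℕ) (x t w : ℝ) (u : ℕ → ℝ) : pr m (Pm (m+1) x t w u) = Pm m x t w u := by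
  refine Prod.ext rfl (Prod.ext rfl (Prod.ext rfl ?_))
  funext i; rfl

/-- the `g`-level total derivative -/
noncomputable def Dg (m : ℕ) (g : Em m → ℝ) : Em (m+1) → ℝ := fun p =>
  dX g (pr m p) + (cu (m+1) 0 p) ^ 2 * dW g (pr m p) +
    ∑ i : Fin (m+1), cu (m+1) i.succ p * du m i g (pr m p)

lemma contDiff_Dg (hg : ContDiff ℝ (⊤ : ℕ∞) g) : ContDiff ℝ (⊤ : ℕ∞) (Dg m g) := by
  refine ContDiff.add (ContDiff.add ((contDiff_dX hg).comp (contDiff_pr m))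
    (ContDiff.mul ((contDiff_cu (m+1) 0).pow 2) ((contDiff_dW hg).comp (contDiff_pr m)))) ?_
  exact ContDiff.sum fun i _ => ContDiff.mul (contDiff_cu (m+1) i.succ)
    ((contDiff_du hg i).comp (contDiff_pr m))

lemma DD_eq_lift (hg : ContDiff ℝ (⊤ : ℕ∞) g) (x t w : ℝ) (u : ℕ → ℝ) :
    DD (lift m g) x t w u = pdx (lift m g) x t w u + (u 0) ^ 2 * pdw (lift m g) x t w u +
      ∑ i ∈ Finset.range (m+1), u (i + 1) * pdu i (lift m g) x t w u := by
  rw [DD]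
  congr 1
  exact tsum_eq_sum (fun i hi => by
    rw [pdu_lift_out hg (by simpa using hi), mul_zero])

lemma DD_lift (hg : ContDiff ℝ (⊤ : ℕ∞) g) :
    DD (lift m g) = lift (m+1) (Dg m g) := by
  funext x t w u
  rw [DD_eq_lift hg, pdx_lift hg, pdw_lift hg]
  have hs : ∑ i ∈ Finset.range (m+1), u (i + 1) * pdu i (lift m g) x t w u
      = ∑ i : Fin (m+1), u (i + 1) * pdu i (lift m g) x t w u := by
    rw [← Fin.sum_univ_eq_sum_range]
  rw [hs]
  show _ = Dg m g (Pm (m+1) x t w u)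
  rw [Dg, pr_Pm]
  have h4 : ∀ i : Fin (m+1), u (i + 1) * pdu i (lift m g) x t w u
      = cu (m+1) i.succ (Pm (m+1) x t w u) * du m i g (Pm m x t w u) := fun i => by
    rw [pdu_lift hg]; rfl
  rw [Finset.sum_congr rfl (fun i _ => h4 i)]
  simp [lift, cu, Pm, dX, dW]

lemma rep_DD_iter (hg : ContDiff ℝ (⊤ : ℕ∞) g) :
    ∀ n, ∃ h : Em (m+n) → ℝ, ContDiff ℝ (⊤ : ℕ∞) h ∧ DD^[n] (lift m g) = lift (m+n) h := by
  intro n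
  induction n with
  | zero => exact ⟨g, hg, rfl⟩
  | succ n ih =>
    obtain ⟨h, hh, he⟩ := ih
    refine ⟨Dg (m+n) h, contDiff_Dg hh, ?_⟩
    rw [Function.iterate_succ_apply', he, DD_lift hh]
    rfl

/-- pdu of a pointwise-constant function vanishes -/
lemma pdu_const (i : ℕ) (c : ℝ) {A : Jet} (h : ∀ x t w u, A x t w u = c)
    (x t w : ℝ) (u : ℕ → ℝ) : pdu i A x t w u = 0 := by
  rw [pdu]
  have : (fun v => A x t w (Function.update u i v)) = fun _ => c := by
    funext v; exact h _ _ _ _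
  rw [this, deriv_const]

lemma pdx_const (c : ℝ) {A : Jet} (h : ∀ x t w u, A x t w u = c)
    (x t w : ℝ) (u : ℕ → ℝ) : pdx A x t w u = 0 := by
  rw [pdx]
  have : (fun y => A y t w u) = fun _ => c := by funext y; exact h _ _ _ _
  rw [this, deriv_const]

lemma pdw_const (c : ℝ) {A : Jet} (h : ∀ x t w u, A x t w u = c)
    (x t w : ℝ) (u : ℕ → ℝ) : pdw A x t w u = 0 := by
  rw [pdw]
  have : (fun z => A x t z u) = fun _ => c := by funext z; exact h _ _ _ _
  rw [this, deriv_const]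

/-- DD of a pointwise-constant function vanishes -/
lemma DD_const (c : ℝ) {A : Jet} (h : ∀ x t w u, A x t w u = c)
    (x t w : ℝ) (u : ℕ → ℝ) : DD A x t w u = 0 := by
  rw [DD, pdx_const c h, pdw_const c h]
  have : ∀ i : ℕ, u (i+1) * pdu i A x t w u = 0 := fun i => by
    rw [pdu_const i c h, mul_zero]
  rw [tsum_congr this]
  simp

end CDIS
namespace CDIS

variable {m : ℕ} {g : Em m → ℝ}

/-- The fundamental commutation identity  ∂_{u_{j+1}} ∘ D = D ∘ ∂_{u_{j+1}} + ∂_{u_j}. -/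
lemma comm (hg : ContDiff ℝ (⊤ : ℕ∞) g) (j : ℕ) (x t w : ℝ) (u : ℕ → ℝ) :
    pdu (j+1) (DD (lift m g)) x t w u
      = DD (pdu (j+1) (lift m g)) x t w u + pdu j (lift m g) x t w u := by
  have hDD : DD (lift m g) = fun x t w u =>
      lift m (dX g) x t w u + (u 0)^2 * lift m (dW g) x t w u +
        ∑ i ∈ Finset.range (m+1), u (i+1) * lift m (du m i g) x t w u := by
    funext x t w u
    rw [DD_eq_lift hg, pdx_lift hg, pdw_lift hg]
    refine congrArg₂ _ rfl (Finset.sum_congr rfl fun i _ => by rw [pdu_lift hg])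
  have hfun : (fun v => DD (lift m g) x t w (Function.update u (j+1) v))
      = fun v => lift m (dX g) x t w (Function.update u (j+1) v)
        + (u 0)^2 * lift m (dW g) x t w (Function.update u (j+1) v)
        + ∑ i ∈ Finset.range (m+1), (Function.update u (j+1) v (i+1))
            * lift m (du m i g) x t w (Function.update u (j+1) v) := by
    funext v
    simp only [hDD]
    rw [Function.update_of_ne (by omega : (0:ℕ) ≠ j+1)]
  have h3 : ∀ i : ℕ, HasDerivAt (fun v => Function.update u (j+1) v (i+1))
      (if i = j then (1:ℝ) else 0) (u (j+1)) := by
    intro i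
    rcases eq_or_ne i j with rfl | hij
    · have : (fun v => Function.update u (i+1) v (i+1)) = fun v => v := by
        funext v; rw [Function.update_self]
      rw [this, if_pos rfl]
      exact hasDerivAt_id _
    · have : (fun v => Function.update u (j+1) v (i+1)) = fun _ => u (i+1) := by
        funext v; rw [Function.update_of_ne (by omega : i+1 ≠ j+1)]
      rw [this, if_neg hij]
      exact hasDerivAt_const _ _
  have H : HasDerivAt (fun v => DD (lift m g) x t w (Function.update u (j+1) v))
      (lift m (du m (j+1) (dX g)) x t w u
        + (u 0)^2 * lift m (du m (j+1) (dW g)) x t w u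
        + ∑ i ∈ Finset.range (m+1),
            ((if i = j then (1:ℝ) else 0) * lift m (du m i g) x t w u
              + u (i+1) * lift m (du m (j+1) (du m i g)) x t w u)) (u (j+1)) := by
    rw [hfun]
    have hsum : HasDerivAt (fun v => ∑ i ∈ Finset.range (m+1),
        (Function.update u (j+1) v (i+1)) * lift m (du m i g) x t w (Function.update u (j+1) v))
        (∑ i ∈ Finset.range (m+1),
            ((if i = j then (1:ℝ) else 0) * lift m (du m i g) x t w u
              + u (i+1) * lift m (du m (j+1) (du m i g)) x t w u)) (u (j+1)) := by
      refine HasDerivAt.fun_sum fun i _ => ?_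
      have := (h3 i).mul (slice_u (contDiff_du hg i) x t w u (j+1))
      simpa [Function.update_eq_self, Pi.mul_def] using this
    exact ((slice_u (contDiff_dX hg) x t w u (j+1)).add
      ((slice_u (contDiff_dW hg) x t w u (j+1)).const_mul ((u 0)^2))).add hsum
  have hLHS : pdu (j+1) (DD (lift m g)) x t w u = _ := H.deriv
  rw [hLHS]
  have hRHS : DD (pdu (j+1) (lift m g)) x t w u
      = lift m (dX (du m (j+1) g)) x t w u + (u 0)^2 * lift m (dW (du m (j+1) g)) x t w u
        + ∑ i ∈ Finset.range (m+1), u (i+1) * lift m (du m i (du m (j+1) g)) x t w u := by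
    rw [pdu_lift hg, DD_eq_lift (contDiff_du hg (j+1)), pdx_lift (contDiff_du hg (j+1)),
      pdw_lift (contDiff_du hg (j+1))]
    exact congrArg₂ _ rfl (Finset.sum_congr rfl fun i _ =>
      by rw [pdu_lift (contDiff_du hg (j+1))])
  rw [hRHS, du_dX_swap hg, du_dW_swap hg]
  have hδ : ∑ i ∈ Finset.range (m+1), (if i = j then (1:ℝ) else 0) * lift m (du m i g) x t w u
      = pdu j (lift m g) x t w u := by
    rw [pdu_lift hg]
    by_cases hj : j < m + 1
    · rw [Finset.sum_congr rfl (fun i _ => by rw [ite_mul, one_mul, zero_mul]),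
        Finset.sum_ite_eq' (Finset.range (m+1)) j (fun i => lift m (du m i g) x t w u)]
      simp [hj]
    · rw [Finset.sum_eq_zero (fun i hi => by
        rw [if_neg (by simp at hi; omega), zero_mul])]
      rw [lift, du, dif_neg hj]
  rw [Finset.sum_add_distrib, hδ]
  have hsw : ∑ i ∈ Finset.range (m+1), u (i+1) * lift m (du m (j+1) (du m i g)) x t w u
      = ∑ i ∈ Finset.range (m+1), u (i+1) * lift m (du m i (du m (j+1) g)) x t w u :=
    Finset.sum_congr rfl fun i _ => by rw [du_swap hg]
  rw [hsw]
  ring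

end CDIS
namespace CDIS

noncomputable def fF : Em 3 → ℝ := fun p =>
  cu 3 ⟨3, by omega⟩ p + 3 * (cu 3 ⟨0, by omega⟩ p) ^ 2 * cu 3 ⟨2, by omega⟩ p
    + 9 * cu 3 ⟨0, by omega⟩ p * (cu 3 ⟨1, by omega⟩ p) ^ 2
    + 3 * (cu 3 ⟨0, by omega⟩ p) ^ 4 * cu 3 ⟨1, by omega⟩ p

lemma contDiff_fF : ContDiff ℝ (⊤ : ℕ∞) fF := by
  unfold fF
  exact ((((contDiff_cu 3 _).add
    ((contDiff_const.mul ((contDiff_cu 3 _).pow 2)).mul (contDiff_cu 3 _))).add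
    ((contDiff_const.mul (contDiff_cu 3 _)).mul ((contDiff_cu 3 _).pow 2))).add
    ((contDiff_const.mul ((contDiff_cu 3 _).pow 4)).mul (contDiff_cu 3 _)))

lemma Fj_lift : Fj = lift 3 fF := rfl

lemma pdu3_Fj (x t w : ℝ) (u : ℕ → ℝ) : pdu 3 Fj x t w u = 1 := by
  rw [pdu]
  have h : (fun v => Fj x t w (Function.update u 3 v))
      = fun v => v + (3*(u 0)^2*u 2 + 9*u 0*(u 1)^2 + 3*(u 0)^4*u 1) := by
    funext v
    simp only [Fj, Function.update_apply]
    norm_num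
    ring
  rw [h]
  simpa using ((hasDerivAt_id (u 3)).add_const _).deriv

lemma pdu2_Fj (x t w : ℝ) (u : ℕ → ℝ) : pdu 2 Fj x t w u = 3 * (u 0)^2 := by
  rw [pdu]
  have h : (fun v => Fj x t w (Function.update u 2 v))
      = fun v => 3*(u 0)^2 * v + (u 3 + 9*u 0*(u 1)^2 + 3*(u 0)^4*u 1) := by
    funext v
    simp only [Fj, Function.update_apply]
    norm_num
    ring
  rw [h]
  have hd : HasDerivAt (fun v : ℝ => 3*(u 0)^2 * v + (u 3 + 9*u 0*(u 1)^2 + 3*(u 0)^4*u 1))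
      (3*(u 0)^2) (u 2) := by
    simpa using ((hasDerivAt_id (u 2)).const_mul (3*(u 0)^2)).add_const
      (u 3 + 9*u 0*(u 1)^2 + 3*(u 0)^4*u 1)
  exact hd.deriv

lemma top_coeff : ∀ n, ∀ x t w : ℝ, ∀ u : ℕ → ℝ, pdu (n+3) (DD^[n] Fj) x t w u = 1 := by
  intro n
  induction n with
  | zero => exact pdu3_Fj
  | succ n ih =>
    intro x t w u
    obtain ⟨h, hh, he⟩ := rep_DD_iter contDiff_fF (m := 3) (g := fF) n
    have ih' := ih x t w u
    rw [Fj_lift, he] at ih'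
    rw [Fj_lift, Function.iterate_succ_apply', he]
    have hc := comm hh (n+3) x t w u
    have hz : DD (pdu (n+3+1) (lift (3+n) h)) x t w u = 0 :=
      DD_const 0 (fun x t w u => pdu_lift_out hh (by omega) x t w u) x t w u
    exact hc.trans (by rw [hz, ih', zero_add])

lemma second_coeff : ∀ n, ∀ x t w : ℝ, ∀ u : ℕ → ℝ,
    pdu (n+2) (DD^[n] Fj) x t w u = 3 * (u 0)^2 := by
  intro n
  induction n with
  | zero => exact pdu2_Fj
  | succ n ih =>
    intro x t w u
    obtain ⟨h, hh, he⟩ := rep_DD_iter contDiff_fF (m := 3) (g := fF) n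
    have htop : ∀ x t w : ℝ, ∀ u : ℕ → ℝ, pdu (n+2+1) (lift (3+n) h) x t w u = 1 := by
      intro x t w u
      have h0 := top_coeff n x t w u
      rw [Fj_lift, he] at h0
      exact h0
    have ih' := ih x t w u
    rw [Fj_lift, he] at ih'
    rw [Fj_lift, Function.iterate_succ_apply', he]
    have hc := comm hh (n+2) x t w u
    have hz : DD (pdu (n+2+1) (lift (3+n) h)) x t w u = 0 :=
      DD_const 1 htop x t w u
    exact hc.trans (by rw [hz, ih', zero_add])

lemma sigma_upd (x t w : ℝ) (u : ℕ → ℝ) {i : ℕ} (hi : 3 ≤ i) (v : ℝ) :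
    sigmaJ x t w (Function.update u i v) = sigmaJ x t w u := by
  rw [sigmaJ, Function.update_of_ne (by omega : (0:ℕ) ≠ i),
    Function.update_of_ne (by omega : (1:ℕ) ≠ i),
    Function.update_of_ne (by omega : (2:ℕ) ≠ i)]
  rfl

end CDIS
namespace CDIS

lemma slice_u_out {M : ℕ} {q : Em M → ℝ} (hq : ContDiff ℝ (⊤ : ℕ∞) q) {i : ℕ} (hi : ¬ i < M+1)
    (x t w : ℝ) (u : ℕ → ℝ) :
    HasDerivAt (fun v => lift M q x t w (Function.update u i v)) 0 (u i) := by
  have h := slice_u hq x t w u i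
  rwa [lift, du, dif_neg hi] at h

variable {k' : ℕ} {g₀ : Em (k'+1) → ℝ}

/-- coefficient extraction from the symmetry equation: `D(∂G/∂u_k) = 0`. -/
lemma DDh_eq_zero (hg₀ : ContDiff ℝ (⊤ : ℕ∞) g₀)
    (hsym : ∀ x t w u, DDt (lift (k'+1) g₀) x t w u = FstarJ (lift (k'+1) g₀) x t w u) :
    ∀ x t w u : _, DD (pdu (k'+1) (lift (k'+1) g₀)) x t w u = 0 := by
  set L := lift (k'+1) g₀ with hL
  set g₁ := Dg (k'+1) g₀ with hg1def
  have hg₁ : ContDiff ℝ (⊤ : ℕ∞) g₁ := contDiff_Dg hg₀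
  have hDD1 : DD L = lift (k'+2) g₁ := DD_lift hg₀
  set g₂ := Dg (k'+2) g₁ with hg2def
  have hg₂ : ContDiff ℝ (⊤ : ℕ∞) g₂ := contDiff_Dg hg₁
  have hDD2 : DD (DD L) = lift (k'+3) g₂ := by rw [hDD1]; exact DD_lift hg₁
  -- c2
  have c2 : ∀ x t w u : _, pdu (k'+2) (DD L) x t w u = pdu (k'+1) L x t w u := by
    intro x t w u
    have hc := comm hg₀ (k'+1) x t w u
    have hz : DD (pdu (k'+1+1) L) x t w u = 0 :=
      DD_const 0 (fun x t w u => pdu_lift_out hg₀ (by omega) x t w u) x t w u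
    rw [hz, zero_add] at hc
    exact hc
  -- c3
  have c3 : ∀ x t w u : _, pdu (k'+1) (DD L) x t w u
      = DD (pdu (k'+1) L) x t w u + pdu k' L x t w u := fun x t w u => comm hg₀ k' x t w u
  -- c4
  have c4 : ∀ x t w u : _, pdu (k'+3) (DD (DD L)) x t w u = pdu (k'+1) L x t w u := by
    intro x t w u
    have hc := comm hg₁ (k'+2) x t w u
    rw [← hDD1] at hc
    have hz : DD (pdu (k'+2+1) (DD L)) x t w u = 0 := by
      refine DD_const 0 (fun x t w u => ?_) x t w u
      rw [hDD1]
      exact pdu_lift_out hg₁ (by omega) x t w u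
    rw [hz, zero_add] at hc
    rw [hc]
    exact c2 x t w u
  -- c5
  have c5 : ∀ x t w u : _, pdu (k'+2) (DD (DD L)) x t w u
      = DD (pdu (k'+1) L) x t w u + (DD (pdu (k'+1) L) x t w u + pdu k' L x t w u) := by
    intro x t w u
    have hc := comm hg₁ (k'+1) x t w u
    rw [← hDD1] at hc
    have he : pdu (k'+1+1) (DD L) = pdu (k'+1) L := by
      funext x t w u; exact c2 x t w u
    rw [he, c3 x t w u] at hc
    exact hc
  -- c6
  have c6 : ∀ x t w u : _, pdu (k'+3) (DD (DD (DD L))) x t w u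
      = DD (pdu (k'+1) L) x t w u
        + (DD (pdu (k'+1) L) x t w u + (DD (pdu (k'+1) L) x t w u + pdu k' L x t w u)) := by
    intro x t w u
    have hc := comm hg₂ (k'+2) x t w u
    rw [← hDD2] at hc
    have he : pdu (k'+2+1) (DD (DD L)) = pdu (k'+1) L := by
      funext x t w u; exact c4 x t w u
    rw [he, c5 x t w u] at hc
    exact hc
  -- pdu (k'+3) (pdu i Fj) vanishes
  have hvi : ∀ i : ℕ, ∀ x t w u : _, pdu (k'+3) (pdu i Fj) x t w u = 0 := by
    intro i x t w u
    rw [Fj_lift, pdu_lift contDiff_fF, pdu_lift (contDiff_du contDiff_fF i),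
      du_swap contDiff_fF (k'+3) i]
    rw [← pdu_lift (contDiff_du contDiff_fF (k'+3))]
    rcases Nat.lt_or_ge (k'+3) 4 with h4 | h4
    · have hk3 : k'+3 = 3 := by omega
      rw [hk3]
      refine pdu_const i 1 (fun x t w u => ?_) x t w u
      rw [← pdu_lift contDiff_fF 3, ← Fj_lift]
      exact pdu3_Fj x t w u
    · have hz : du 3 (k'+3) fF = fun _ => 0 := by rw [du, dif_neg (by omega)]
      rw [hz]
      exact pdu_const i 0 (fun _ _ _ _ => rfl) x t w u
  -- extraction from DDt
  intro x t w u
  have hDtfun : (fun v => DDt L x t w (Function.update u (k'+3) v)) = fun v =>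
      lift (k'+1) (dT g₀) x t w (Function.update u (k'+3) v)
      + sigmaJ x t w u * lift (k'+1) (dW g₀) x t w (Function.update u (k'+3) v)
      + ∑ i ∈ Finset.range (k'+2), DD^[i] Fj x t w (Function.update u (k'+3) v)
          * pdu i L x t w (Function.update u (k'+3) v) := by
    funext v
    rw [DDt, sigma_upd x t w u (by omega) v, ← pdt_lift hg₀, ← pdw_lift hg₀]
    congr 1
    exact tsum_eq_sum (fun i hi => by
      rw [pdu_lift_out hg₀ (by simp at hi; omega), mul_zero])
  have hDt : pdu (k'+3) (DDt L) x t w u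
      = ∑ i ∈ Finset.range (k'+2), pdu (k'+3) (DD^[i] Fj) x t w u * pdu i L x t w u := by
    rw [pdu]
    rw [hDtfun]
    have h1 : HasDerivAt (fun v => lift (k'+1) (dT g₀) x t w (Function.update u (k'+3) v))
        0 (u (k'+3)) := slice_u_out (contDiff_dT hg₀) (by omega) x t w u
    have h2 : HasDerivAt (fun v => sigmaJ x t w u
        * lift (k'+1) (dW g₀) x t w (Function.update u (k'+3) v))
        (sigmaJ x t w u * 0) (u (k'+3)) :=
      (slice_u_out (contDiff_dW hg₀) (by omega) x t w u).const_mul _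
    have h3 : HasDerivAt (fun v => ∑ i ∈ Finset.range (k'+2),
        DD^[i] Fj x t w (Function.update u (k'+3) v) * pdu i L x t w (Function.update u (k'+3) v))
        (∑ i ∈ Finset.range (k'+2), pdu (k'+3) (DD^[i] Fj) x t w u * pdu i L x t w u)
        (u (k'+3)) := by
      refine HasDerivAt.fun_sum fun i _ => ?_
      obtain ⟨q, hq, heq⟩ := rep_DD_iter contDiff_fF (m := 3) i
      have hFi : DD^[i] Fj = lift (3+i) q := by rw [Fj_lift, heq]
      have hA : HasDerivAt (fun v => DD^[i] Fj x t w (Function.update u (k'+3) v))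
          (pdu (k'+3) (DD^[i] Fj) x t w u) (u (k'+3)) := by
        rw [hFi, pdu_lift hq]
        exact slice_u hq x t w u (k'+3)
      have hB : HasDerivAt (fun v => pdu i L x t w (Function.update u (k'+3) v))
          0 (u (k'+3)) := by
        rw [pdu_lift hg₀]
        exact slice_u_out (contDiff_du hg₀ i) (by omega) x t w u
      have := hA.mul hB
      simpa [Function.update_eq_self, Pi.mul_def] using this
    have H := (h1.add h2).add h3
    refine H.deriv.trans ?_
    simp
  have hDtval : pdu (k'+3) (DDt L) x t w u
      = pdu k' L x t w u + 3 * (u 0)^2 * pdu (k'+1) L x t w u := by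
    rw [hDt, Finset.sum_range_succ, Finset.sum_range_succ]
    have hzero : ∀ i ∈ Finset.range k', pdu (k'+3) (DD^[i] Fj) x t w u * pdu i L x t w u = 0 := by
      intro i hi
      simp only [Finset.mem_range] at hi
      obtain ⟨q, hq, heq⟩ := rep_DD_iter contDiff_fF (m := 3) i
      have hFi : DD^[i] Fj = lift (3+i) q := by rw [Fj_lift, heq]
      rw [hFi, pdu_lift_out hq (by omega), zero_mul]
    rw [Finset.sum_eq_zero hzero, top_coeff k' x t w u]
    have h2 := second_coeff (k'+1) x t w u
    rw [show k'+1+2 = k'+3 from rfl] at h2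
    rw [h2]
    ring
  -- extraction from FstarJ
  have hB' : ∀ i : ℕ, HasDerivAt (fun v => DD^[i] L x t w (Function.update u (k'+3) v))
      (pdu (k'+3) (DD^[i] L) x t w u) (u (k'+3)) := by
    intro i
    obtain ⟨q, hq, heq⟩ := rep_DD_iter hg₀ (m := k'+1) i
    rw [heq, pdu_lift hq]
    exact slice_u hq x t w u (k'+3)
  have hA' : ∀ i : ℕ, HasDerivAt (fun v => pdu i Fj x t w (Function.update u (k'+3) v))
      (pdu (k'+3) (pdu i Fj) x t w u) (u (k'+3)) := by
    intro i
    rw [Fj_lift, pdu_lift contDiff_fF, pdu_lift (contDiff_du contDiff_fF i)]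
    exact slice_u (contDiff_du contDiff_fF i) x t w u (k'+3)
  have hF : pdu (k'+3) (FstarJ L) x t w u
      = ∑ i ∈ Finset.range 4, (pdu (k'+3) (pdu i Fj) x t w u * DD^[i] L x t w u
          + pdu i Fj x t w u * pdu (k'+3) (DD^[i] L) x t w u) := by
    rw [pdu]
    have hfun : (fun v => FstarJ L x t w (Function.update u (k'+3) v)) = fun v =>
        ∑ i ∈ Finset.range 4, pdu i Fj x t w (Function.update u (k'+3) v)
          * DD^[i] L x t w (Function.update u (k'+3) v) := rfl
    rw [hfun]
    have H : HasDerivAt _ _ _ := HasDerivAt.fun_sum (fun i (_ : i ∈ Finset.range 4) =>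
      ((hA' i).mul (hB' i)))
    refine H.deriv.trans ?_
    refine Finset.sum_congr rfl fun i _ => ?_
    rw [Function.update_eq_self]
  have hFval : pdu (k'+3) (FstarJ L) x t w u
      = 3 * (u 0)^2 * pdu (k'+1) L x t w u
        + (DD (pdu (k'+1) L) x t w u
          + (DD (pdu (k'+1) L) x t w u + (DD (pdu (k'+1) L) x t w u + pdu k' L x t w u))) := by
    rw [hF]
    rw [Finset.sum_range_succ, Finset.sum_range_succ, Finset.sum_range_succ,
      Finset.sum_range_succ, Finset.range_zero, Finset.sum_empty]
    rw [hvi 0 x t w u, hvi 1 x t w u, hvi 2 x t w u, hvi 3 x t w u]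
    have e0 : pdu (k'+3) (DD^[0] L) x t w u = 0 := pdu_lift_out hg₀ (by omega) x t w u
    have e1 : pdu (k'+3) (DD^[1] L) x t w u = 0 := by
      show pdu (k'+3) (DD L) x t w u = 0
      rw [hDD1]
      exact pdu_lift_out hg₁ (by omega) x t w u
    have e2 : pdu (k'+3) (DD^[2] L) x t w u = pdu (k'+1) L x t w u := c4 x t w u
    have e3 : pdu (k'+3) (DD^[3] L) x t w u
        = DD (pdu (k'+1) L) x t w u
          + (DD (pdu (k'+1) L) x t w u + (DD (pdu (k'+1) L) x t w u + pdu k' L x t w u)) :=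
      c6 x t w u
    rw [e0, e1, e2, e3, pdu2_Fj, pdu3_Fj]
    ring
  have hsymEq : pdu (k'+3) (DDt L) x t w u = pdu (k'+3) (FstarJ L) x t w u := by
    have : DDt L = FstarJ L := by funext a b c d; exact hsym a b c d
    rw [this]
  rw [hDtval, hFval] at hsymEq
  linarith

end CDIS

namespace CDIS

lemma Pm_surj (m : ℕ) (p : Em m) : ∃ x t w u, Pm m x t w u = p := by
  refine ⟨p.1, p.2.1, p.2.2.1, fun n => if h : n < m+1 then p.2.2.2 ⟨n, h⟩ else 0, ?_⟩
  refine Prod.ext rfl (Prod.ext rfl (Prod.ext rfl ?_))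
  funext i
  simp [Pm, i.isLt, not_lt.mpr (Fin.is_le i)]

lemma lift_update_const {M : ℕ} {q : Em M → ℝ} (hq : ContDiff ℝ (⊤ : ℕ∞) q) {n : ℕ}
    (hz : ∀ x t w u, pdu n (lift M q) x t w u = 0) (x t w : ℝ) (v : ℕ → ℝ) (a : ℝ) :
    lift M q x t w (Function.update v n a) = lift M q x t w v := by
  have key : ∀ s : ℝ, HasDerivAt (fun r => lift M q x t w (Function.update v n r)) 0 s := by
    intro s
    have h0 := slice_u hq x t w (Function.update v n s) n
    have hfn : (fun r => lift M q x t w (Function.update (Function.update v n s) n r))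
        = fun r => lift M q x t w (Function.update v n r) := by
      funext r; rw [Function.update_idem]
    have hval : lift M (du M n q) x t w (Function.update v n s) = 0 := by
      rw [← pdu_lift hq]
      exact hz x t w (Function.update v n s)
    rw [hfn, hval, Function.update_self] at h0
    exact h0
  have hcst := is_const_of_deriv_eq_zero (f := fun r => lift M q x t w (Function.update v n r))
    (fun s => (key s).differentiableAt) (fun s => (key s).deriv) a (v n)
  rwa [Function.update_eq_self] at hcst

lemma lift_u_indep {M : ℕ} {q : Em M → ℝ} (hq : ContDiff ℝ (⊤ : ℕ∞) q)
    (h0 : ∀ j, du M j q = fun _ => 0) (x t w : ℝ) (u u' : ℕ → ℝ) :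
    lift M q x t w u = lift M q x t w u' := by
  have hz : ∀ j, ∀ x t w u : _, pdu j (lift M q) x t w u = 0 := by
    intro j x t w u
    rw [pdu_lift hq, h0 j]
    rfl
  have claim : ∀ n : ℕ, lift M q x t w u = lift M q x t w (fun i => if i < n then u' i else u i) := by
    intro n
    induction n with
    | zero =>
      have : (fun i => if i < 0 then u' i else u i) = u := by funext i; simp
      rw [this]
    | succ n ih =>
      have hupd : (fun i => if i < n+1 then u' i else u i)
          = Function.update (fun i => if i < n then u' i else u i) n (u' n) := by
        funext i
        rcases eq_or_ne i n with rfl | hne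
        · simp
        · rw [Function.update_of_ne hne]
          rcases Nat.lt_or_ge i n with h1 | h1
          · rw [if_pos h1, if_pos (by omega)]
          · rw [if_neg (by omega), if_neg (by omega)]
      rw [hupd, lift_update_const hq (hz n), ← ih]
  have hagree : lift M q x t w (fun i => if i < M+1 then u' i else u i) = lift M q x t w u' := by
    rw [lift, lift]
    congr 1
    refine Prod.ext rfl (Prod.ext rfl (Prod.ext rfl ?_))
    funext i
    simp [Pm, i.isLt, not_lt.mpr (Fin.is_le i)]
  rw [claim (M+1), hagree]

lemma du_eq_zero_fun {M : ℕ} {q : Em M → ℝ} (hq : ContDiff ℝ (⊤ : ℕ∞) q) {j : ℕ}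
    (hz : ∀ x t w u : _, pdu j (lift M q) x t w u = 0) : du M j q = fun _ => 0 := by
  funext p
  obtain ⟨x, t, w, u, rfl⟩ := Pm_surj M p
  have := hz x t w u
  rw [pdu_lift hq] at this
  exact this

lemma dX_zero_fun (M : ℕ) : dX (fun _ : Em M => (0:ℝ)) = fun _ => 0 := by
  funext p
  rw [dX]
  rw [show (fun _ : Em M => (0:ℝ)) = fun _ => (0:ℝ) from rfl]
  simp [fderiv_const]

lemma dW_zero_fun (M : ℕ) : dW (fun _ : Em M => (0:ℝ)) = fun _ => 0 := by
  funext p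
  rw [dW]
  simp [fderiv_const]

/-- A lift annihilated by `DD` depends only on `t`. -/
lemma only_t {M : ℕ} {q : Em M → ℝ} (hq : ContDiff ℝ (⊤ : ℕ∞) q)
    (hDD : ∀ x t w u : _, DD (lift M q) x t w u = 0) :
    ∀ x t w u : _, lift M q x t w u = lift M q 0 t 0 (fun _ => 0) := by
  -- first, all u-derivatives vanish
  have step : ∀ j, (∀ x t w u : _, pdu (j+1) (lift M q) x t w u = 0) →
      ∀ x t w u : _, pdu j (lift M q) x t w u = 0 := by
    intro j hj1 x t w u
    have hc := comm hq j x t w u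
    have hL : pdu (j+1) (DD (lift M q)) x t w u = 0 :=
      pdu_const (j+1) 0 hDD x t w u
    have hz2 : DD (pdu (j+1) (lift M q)) x t w u = 0 := DD_const 0 hj1 x t w u
    rw [hL, hz2, zero_add] at hc
    exact hc.symm
  have down : ∀ d, ∀ x t w u : _, pdu (M+1-d) (lift M q) x t w u = 0 := by
    intro d
    induction d with
    | zero => exact fun x t w u => pdu_lift_out hq (by omega) x t w u
    | succ d ih =>
      rcases Nat.lt_or_ge d (M+1) with hd | hd
      · refine step (M+1-(d+1)) ?_
        have he : M+1-(d+1)+1 = M+1-d := by omega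
        rw [he]
        exact ih
      · have he : M+1-(d+1) = M+1-d := by omega
        rw [he]
        exact ih
  have hzall : ∀ j, ∀ x t w u : _, pdu j (lift M q) x t w u = 0 := by
    intro j
    rcases Nat.lt_or_ge j (M+1) with hj | hj
    · have he : M+1-(M+1-j) = j := by omega
      have := down (M+1-j)
      rw [he] at this
      exact this
    · exact fun x t w u => pdu_lift_out hq (by omega) x t w u
  have hdu0 : ∀ j, du M j q = fun _ => 0 := fun j => du_eq_zero_fun hq (hzall j)
  have hindep := lift_u_indep hq hdu0
  -- pdx and pdw vanish
  have hxw : ∀ x t w u : _, pdx (lift M q) x t w u + (u 0)^2 * pdw (lift M q) x t w u = 0 := by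
    intro x t w u
    have := hDD x t w u
    rw [DD_eq_lift hq] at this
    rw [Finset.sum_eq_zero (fun i _ => by rw [hzall i x t w u, mul_zero])] at this
    rwa [add_zero] at this
  -- pdx is independent of u, so vanish everywhere
  have hXindep := lift_u_indep (contDiff_dX hq) (fun j => by
    rw [du_dX_swap hq j, hdu0 j, dX_zero_fun])
  have hWindep := lift_u_indep (contDiff_dW hq) (fun j => by
    rw [du_dW_swap hq j, hdu0 j, dW_zero_fun])
  have hpdx : ∀ x t w u : _, pdx (lift M q) x t w u = 0 := by
    intro x t w u
    rw [pdx_lift hq, hXindep x t w u (fun _ => 0)]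
    have h1 := hxw x t w (fun _ => 0)
    rw [pdx_lift hq, pdw_lift hq] at h1
    simpa using h1
  have hpdw : ∀ x t w u : _, pdw (lift M q) x t w u = 0 := by
    intro x t w u
    rw [pdw_lift hq, hWindep x t w u (fun _ => 1)]
    have h1 := hxw x t w (fun _ => 1)
    rw [pdx_lift hq, pdw_lift hq] at h1
    have h2 : lift M (dX q) x t w (fun _ => 1) = 0 := by
      rw [← pdx_lift hq]
      exact hpdx x t w (fun _ => 1)
    rw [h2] at h1
    simpa using h1
  -- conclude
  intro x t w u
  rw [hindep x t w u (fun _ => 0)]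
  have hx : lift M q x t w (fun _ => 0) = lift M q 0 t w (fun _ => 0) := by
    have key : ∀ y : ℝ, HasDerivAt (fun y' => lift M q y' t w (fun _ => 0)) 0 y := by
      intro y
      have h0 := slice_x hq y t w (fun _ => 0)
      rwa [← pdx_lift hq, hpdx] at h0
    exact is_const_of_deriv_eq_zero (fun y => (key y).differentiableAt)
      (fun y => (key y).deriv) x 0
  have hw : lift M q 0 t w (fun _ => 0) = lift M q 0 t 0 (fun _ => 0) := by
    have key : ∀ z : ℝ, HasDerivAt (fun z' => lift M q 0 t z' (fun _ => 0)) 0 z := by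
      intro z
      have h0 := slice_w hq 0 t z (fun _ => 0)
      rwa [← pdw_lift hq, hpdw] at h0
    exact is_const_of_deriv_eq_zero (fun z => (key z).differentiableAt)
      (fun z => (key z).deriv) w 0
  rw [hx, hw]

end CDIS

/-- if G(x,t,ω,u,…,u_k) is a smooth symmetry of the CDIS equation of
order k ≥ 1 (∂G/∂u_k ≠ 0 and D_t(G) = F_*(G)), then ∂G/∂u_k depends only on t:
there is a function c_k with ∂G/∂u_k = c_k(t). -/
theorem symmetry_leading_coefficient_depends_only_on_t
    (k : ℕ) (hk : 1 ≤ k) (G : Jet)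
    (hsmooth : ∃ g : ℝ × ℝ × ℝ × (Fin (k + 1) → ℝ) → ℝ, ContDiff ℝ (⊤ : ℕ∞) g ∧
      ∀ x t w u, G x t w u = g (x, t, w, fun i : Fin (k + 1) => u i))
    (horder : ∃ x t w u, pdu k G x t w u ≠ 0)
    (hsym : ∀ x t w u, DDt G x t w u = FstarJ G x t w u) :
    ∃ c : ℝ → ℝ, ∀ x t w u, pdu k G x t w u = c t := by
  obtain ⟨k', rfl⟩ : ∃ k', k = k' + 1 := ⟨k - 1, by omega⟩
  obtain ⟨g₀, hg₀, hGe⟩ := hsmooth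
  have hG : G = CDIS.lift (k'+1) g₀ := by funext x t w u; exact hGe x t w u
  subst hG
  have hDDh := CDIS.DDh_eq_zero hg₀ hsym
  have hq : ContDiff ℝ (⊤ : ℕ∞) (CDIS.du (k'+1) (k'+1) g₀) := CDIS.contDiff_du hg₀ _
  have hpl : pdu (k'+1) (CDIS.lift (k'+1) g₀)
      = CDIS.lift (k'+1) (CDIS.du (k'+1) (k'+1) g₀) := CDIS.pdu_lift hg₀ (k'+1)
  rw [hpl] at hDDh
  have hot := CDIS.only_t hq hDDh
  exact ⟨fun t => CDIS.lift (k'+1) (CDIS.du (k'+1) (k'+1) g₀) 0 t 0 (fun _ => 0),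
    fun x t w u => by rw [hpl]; exact hot x t w u⟩
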